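/- Let A₁₁, A₁₂, A₂₂ be Riccati data on a complex separable Hilbert space H with diag{A₁₁} − A₂₂ ≫ 0, and let (sₙ) be the successive approximations. Then every even iterate is dominated by every odd iterate: s_{2n} ≤ s_{2m+1} in the Loewner order for all natural numbers n and m. -/

import Mathlib

open MeasureTheory ContinuousLinearMap Filter
open scoped ENNReal NNReal Topology

noncomputable section

/-- `ℓ²(H)`: the Hilbert space of square-summable sequences in `H`, indexed by `ℕ`
(index `k : ℕ` corresponds to the `(k+1)`-st entry in the paper's `1`-based indexing). -/
abbrev l2 (H : Type*) [NormedAddCommGroup H] [InnerProductSpace ℂ H] : Type _ :=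
  lp (fun _ : ℕ => H) 2

variable {H : Type*} [NormedAddCommGroup H] [InnerProductSpace ℂ H]

lemma memℓp_diag (q : H →L[ℂ] H) (ξ : l2 H) : Memℓp (fun k => q (ξ k)) 2 := by
  have h2 : (0:ℝ) < (2 : ℝ≥0∞).toReal := by norm_num
  apply memℓp_gen
  have hs : Summable (fun k => ‖q‖ ^ (2 : ℝ≥0∞).toReal * ‖ξ k‖ ^ (2 : ℝ≥0∞).toReal) :=
    ((lp.memℓp ξ).summable h2).mul_left _
  refine Summable.of_nonneg_of_le (fun k => ?_) (fun k => ?_) hs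
  · positivity
  · rw [← Real.mul_rpow (norm_nonneg _) (norm_nonneg _)]
    exact Real.rpow_le_rpow (norm_nonneg _) (q.le_opNorm _) (by norm_num)

/-- `diag{q}`: the bounded block-diagonal operator on `ℓ²(H)` acting componentwise,
`(diag{q} ξ)ₖ = q (ξₖ)`. -/
def diagOp (q : H →L[ℂ] H) : l2 H →L[ℂ] l2 H :=
  LinearMap.mkContinuous
    { toFun := fun ξ => ⟨fun k => q (ξ k), memℓp_diag q ξ⟩
      map_add' := fun ξ η => by ext k; simp [lp.coeFn_add]; rfl
      map_smul' := fun c ξ => by ext k; simp [lp.coeFn_smul] }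
    ‖q‖
    (by
      intro ξ
      have h2 : (0:ℝ) < (2 : ℝ≥0∞).toReal := by norm_num
      refine lp.norm_le_of_tsum_le h2 (by positivity) ?_
      have hξ : ‖ξ‖ ^ (2 : ℝ≥0∞).toReal = ∑' k, ‖ξ k‖ ^ (2 : ℝ≥0∞).toReal :=
        lp.norm_rpow_eq_tsum h2 ξ
      have hsum : Summable (fun k => ‖ξ k‖ ^ (2 : ℝ≥0∞).toReal) := (lp.memℓp ξ).summable h2
      calc ∑' k, ‖(fun k => q (ξ k)) k‖ ^ (2 : ℝ≥0∞).toReal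
          ≤ ∑' k, ‖q‖ ^ (2 : ℝ≥0∞).toReal * ‖ξ k‖ ^ (2 : ℝ≥0∞).toReal := by
            refine Summable.tsum_le_tsum (fun k => ?_) ?_ (hsum.mul_left _)
            · rw [← Real.mul_rpow (norm_nonneg _) (norm_nonneg _)]
              exact Real.rpow_le_rpow (norm_nonneg _) (q.le_opNorm _) (by norm_num)
            · refine Summable.of_nonneg_of_le (fun k => ?_) (fun k => ?_)
                (hsum.mul_left (‖q‖ ^ (2 : ℝ≥0∞).toReal))
              · positivity
              · rw [← Real.mul_rpow (norm_nonneg _) (norm_nonneg _)]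
                exact Real.rpow_le_rpow (norm_nonneg _) (q.le_opNorm _) (by norm_num)
        _ = (‖q‖ * ‖ξ‖) ^ (2 : ℝ≥0∞).toReal := by
            rw [tsum_mul_left, ← hξ, Real.mul_rpow (norm_nonneg _) (norm_nonneg _)])

@[simp] lemma diagOp_apply (q : H →L[ℂ] H) (ξ : l2 H) (k : ℕ) :
    (diagOp q ξ) k = q (ξ k) := rfl

/-- An operator is *strongly positive* (written `ρ ≫ 0` in the paper) if `δ • I ≤ ρ`
(Loewner order) for some `δ > 0`.  A strongly positive operator is boundedly invertible. -/
def StronglyPositive {E : Type*} [NormedAddCommGroup E] [InnerProductSpace ℂ E]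
    [CompleteSpace E] (ρ : E →L[ℂ] E) : Prop :=
  ∃ δ : ℝ, 0 < δ ∧ δ • (1 : E →L[ℂ] E) ≤ ρ

variable [CompleteSpace H]

/-- The Riccati map `ℱ(s) = A₁₁ + A₁₂ (diag{s} − A₂₂)⁻¹ A₁₂*`.  Here `Ring.inverse` is the
genuine inverse whenever `diag{s} − A₂₂` is boundedly invertible, which is guaranteed when
`diag{s} − A₂₂ ≫ 0`. -/
def riccatiMap (A11 : H →L[ℂ] H) (A12 : l2 H →L[ℂ] H) (A22 : l2 H →L[ℂ] l2 H)
    (s : H →L[ℂ] H) : H →L[ℂ] H :=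
  A11 + A12 ∘L Ring.inverse (diagOp s - A22) ∘L ContinuousLinearMap.adjoint A12

/-- The successive approximations `s₀ = A₁₁`, `s_{n+1} = ℱ(sₙ)`. -/
def riccatiSeq (A11 : H →L[ℂ] H) (A12 : l2 H →L[ℂ] H) (A22 : l2 H →L[ℂ] l2 H) :
    ℕ → (H →L[ℂ] H)
  | 0 => A11
  | n + 1 => riccatiMap A11 A12 A22 (riccatiSeq A11 A12 A22 n)

end

/-!
On the cone `{s | A₁₁ ≤ s}` the Riccati map `ℱ` is order-reversing: `diag{·}` and conjugation
by `A₁₂` are monotone, while inversion is antitone on strictly positive operators, and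
`diag{s} − A₂₂ ≥ diag{A₁₁} − A₂₂ ≫ 0` there. It also maps the cone into itself, and `s₀ = A₁₁`
is the least element of the cone. For any such antitone self-map, `f ∘ f` is monotone, so
`s_{2n} ≤ s_{2m+1}` propagates from `(n, m)` to `(n + 1, m + 1)`, and the boundary cases
`s₀ ≤ s_{2m+1}` and `s_{2n+2} = ℱ(s_{2n+1}) ≤ ℱ(s₀) = s₁` are immediate.
-/

theorem AntitoneOn.iterate_even_le_iterate_odd {α : Type*} [Preorder α] {f : α → α} {a : α}
    (hf : AntitoneOn f (Set.Ici a)) (hmaps : Set.MapsTo f (Set.Ici a) (Set.Ici a)) (n m : ℕ) :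
    f^[2 * n] a ≤ f^[2 * m + 1] a := by
  have hmem : ∀ k, f^[k] a ∈ Set.Ici a := fun k => hmaps.iterate k Set.self_mem_Ici
  induction n generalizing m with
  | zero => exact hmem _
  | succ n ih =>
    cases m with
    | zero =>
      rw [show 2 * (n + 1) = 2 * n + 1 + 1 by ring, Function.iterate_succ_apply']
      exact hf Set.self_mem_Ici (hmem _) (hmem _)
    | succ m =>
      rw [show 2 * (n + 1) = 2 + 2 * n by ring, show 2 * (m + 1) + 1 = 2 + (2 * m + 1) by ring,
        Function.iterate_add_apply, Function.iterate_add_apply]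
      exact hf (hmaps (hmem _)) (hmaps (hmem _)) (hf (hmem _) (hmem _) (ih m))

section Operators

variable {E F : Type*} [NormedAddCommGroup E] [InnerProductSpace ℂ E] [CompleteSpace E]
  [NormedAddCommGroup F] [InnerProductSpace ℂ F] [CompleteSpace F]

theorem StronglyPositive.isStrictlyPositive {ρ : E →L[ℂ] E} (h : StronglyPositive ρ) :
    IsStrictlyPositive ρ :=
  let ⟨_, hδ, hle⟩ := h
  (isStrictlyPositive_one.smul hδ).of_le hle

theorem ContinuousLinearMap.monotone_conj_adjoint (B : E →L[ℂ] F) :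
    Monotone fun ρ : E →L[ℂ] E => B ∘L ρ ∘L adjoint B := by
  intro ρ σ h
  rw [le_def] at h ⊢
  simpa only [sub_comp, comp_sub] using h.conj_adjoint B

theorem ContinuousLinearMap.conj_adjoint_ringInverse_nonneg (B : E →L[ℂ] F) {ρ : E →L[ℂ] E}
    (hρ : IsStrictlyPositive ρ) : 0 ≤ B ∘L Ring.inverse ρ ∘L adjoint B := by
  simpa using B.monotone_conj_adjoint hρ.ringInverse.nonneg

theorem ContinuousLinearMap.conj_adjoint_ringInverse_le (B : E →L[ℂ] F) {ρ σ : E →L[ℂ] E}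
    (hρ : IsStrictlyPositive ρ) (h : ρ ≤ σ) :
    B ∘L Ring.inverse σ ∘L adjoint B ≤ B ∘L Ring.inverse ρ ∘L adjoint B :=
  B.monotone_conj_adjoint (CStarAlgebra.ringInverse_le_ringInverse h hρ)

end Operators

section Diag

variable {H : Type*} [NormedAddCommGroup H] [InnerProductSpace ℂ H] [CompleteSpace H]

theorem diagOp_adjoint (q : H →L[ℂ] H) : diagOp (adjoint q) = adjoint (diagOp q) := by
  rw [eq_adjoint_iff]
  intro ξ η
  rw [lp.inner_eq_tsum, lp.inner_eq_tsum]
  exact tsum_congr fun k => adjoint_inner_left q (η k) (ξ k)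

noncomputable def diagStarRingHom : (H →L[ℂ] H) →⋆ₙ+* (l2 H →L[ℂ] l2 H) where
  toFun := diagOp
  map_mul' _ _ := rfl
  map_zero' := rfl
  map_add' _ _ := rfl
  map_star' := diagOp_adjoint

theorem diagOp_mono : Monotone (diagOp : (H →L[ℂ] H) → l2 H →L[ℂ] l2 H) :=
  OrderHomClass.mono (diagStarRingHom (H := H))

end Diag

section Riccati

variable {H : Type*} [NormedAddCommGroup H] [InnerProductSpace ℂ H] [CompleteSpace H]
  {A11 : H →L[ℂ] H} {A12 : l2 H →L[ℂ] H} {A22 : l2 H →L[ℂ] l2 H}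

theorem riccatiSeq_eq_iterate (n : ℕ) :
    riccatiSeq A11 A12 A22 n = (riccatiMap A11 A12 A22)^[n] A11 := by
  induction n with
  | zero => rfl
  | succ n ih => rw [Function.iterate_succ_apply', ← ih]; rfl

variable (hgap : StronglyPositive (diagOp A11 - A22))
include hgap

theorem isStrictlyPositive_diagOp_sub {s : H →L[ℂ] H} (hs : A11 ≤ s) :
    IsStrictlyPositive (diagOp s - A22) :=
  hgap.isStrictlyPositive.of_le (sub_le_sub_right (diagOp_mono hs) A22)

theorem mapsTo_riccatiMap :
    Set.MapsTo (riccatiMap A11 A12 A22) (Set.Ici A11) (Set.Ici A11) := fun _ hs =>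
  le_add_of_nonneg_right <|
    A12.conj_adjoint_ringInverse_nonneg (isStrictlyPositive_diagOp_sub hgap hs)

theorem riccatiMap_antitoneOn : AntitoneOn (riccatiMap A11 A12 A22) (Set.Ici A11) :=
  fun _ hs _ _ hst => add_le_add_right (A12.conj_adjoint_ringInverse_le
    (isStrictlyPositive_diagOp_sub hgap hs) (sub_le_sub_right (diagOp_mono hst) A22)) A11

end Riccati

theorem riccati_even_le_odd_general
    {H : Type*} [NormedAddCommGroup H] [InnerProductSpace ℂ H] [CompleteSpace H]
    (A11 : H →L[ℂ] H) (A12 : l2 H →L[ℂ] H) (A22 : l2 H →L[ℂ] l2 H)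
    (hgap : StronglyPositive (diagOp A11 - A22)) :
    ∀ n m : ℕ, riccatiSeq A11 A12 A22 (2 * n) ≤ riccatiSeq A11 A12 A22 (2 * m + 1) := by
  intro n m
  rw [riccatiSeq_eq_iterate, riccatiSeq_eq_iterate]
  exact (riccatiMap_antitoneOn hgap).iterate_even_le_iterate_odd (mapsTo_riccatiMap hgap) n m

/-- Every even successive approximation is dominated by every odd one:
`s_{2n} ≤ s_{2m+1}` in the Loewner order. -/
theorem riccati_even_le_odd
    {H : Type*} [NormedAddCommGroup H] [InnerProductSpace ℂ H] [CompleteSpace H]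
    [TopologicalSpace.SeparableSpace H]
    (A11 : H →L[ℂ] H) (A12 : l2 H →L[ℂ] H) (A22 : l2 H →L[ℂ] l2 H)
    (hA11sa : IsSelfAdjoint A11) (hA22sa : IsSelfAdjoint A22)
    (hgap : StronglyPositive (diagOp A11 - A22)) :
    ∀ n m : ℕ, riccatiSeq A11 A12 A22 (2 * n) ≤ riccatiSeq A11 A12 A22 (2 * m + 1) :=
  riccati_even_le_odd_general A11 A12 A22 hgap
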